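/- arXiv:1003.1295 — 6 statements merged into one kernel-verified Lean document; each statement's English description precedes it below -/
import Mathlib

section
/- For any y ∈ [0,1]^N, any subset S ⊆ [N], and any positive integer k, if R(y) denotes the random vector obtained by independently rounding each coordinate y_i to 1 with probability y_i and to 0 otherwise, then E[min{k, Σ_{i∈S} R(y)_i}] ≥ k·(1 − exp(−(Σ_{i∈S} y_i)/k)). -/
open MeasureTheory ProbabilityTheory Finset

/-!
Write `K = k`. If `m` of the 0/1 values `x_i` (`i ∈ S`) equal one, Bernoulli's inequality
gives `min K m ≥ K (1 - (1 - 1/K)^m) = K (1 - ∏_{i ∈ S} (1 - x_i/K))`. The right-hand side is a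
product of independent factors, so its expectation is `K (1 - ∏_{i ∈ S} (1 - y_i/K))`, and
`1 - t ≤ exp (-t)` bounds this product by `exp (-(∑_{i ∈ S} y_i)/K)`.
-/

lemma prod_one_sub_le_exp_neg_sum {ι : Type*} (s : Finset ι) {a : ι → ℝ}
    (ha : ∀ i ∈ s, a i ≤ 1) :
    ∏ i ∈ s, (1 - a i) ≤ Real.exp (-∑ i ∈ s, a i) := by
  rw [← sum_neg_distrib, Real.exp_sum]
  exact prod_le_prod (fun i hi => sub_nonneg.2 (ha i hi)) fun i _ => Real.one_sub_le_exp_neg _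

lemma one_sub_div_mem_Icc {x K : ℝ} (hx : x ∈ Set.Icc (0 : ℝ) 1) (hK : 1 ≤ K) :
    1 - x / K ∈ Set.Icc (0 : ℝ) 1 :=
  ⟨sub_nonneg.2 ((div_le_one₀ (by linarith)).2 (hx.2.trans hK)),
    sub_le_self _ (div_nonneg hx.1 (by linarith))⟩

lemma mul_one_sub_one_sub_inv_pow_le_min {K : ℝ} (hK : 1 ≤ K) (m : ℕ) :
    K * (1 - (1 - K⁻¹) ^ m) ≤ min K m := by
  have hK0 : 0 < K := zero_lt_one.trans_le hK
  have hinv : K⁻¹ ≤ 1 := inv_le_one_of_one_le₀ hK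
  refine le_min ?_ ?_
  · have : 0 ≤ (1 - K⁻¹) ^ m := pow_nonneg (sub_nonneg.2 hinv) m
    nlinarith
  · have bernoulli : 1 + m * (-K⁻¹) ≤ (1 + -K⁻¹) ^ m := one_add_mul_le_pow (by linarith) m
    calc K * (1 - (1 - K⁻¹) ^ m) ≤ K * (m * K⁻¹) := by
          gcongr
          rw [← sub_eq_add_neg] at bernoulli
          linarith
      _ = m := by field_simp

lemma mul_one_sub_prod_le_min_sum {ι : Type*} {K : ℝ} (hK : 1 ≤ K) (s : Finset ι)
    {x : ι → ℝ} (hx : ∀ i ∈ s, x i = 0 ∨ x i = 1) :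
    K * (1 - ∏ i ∈ s, (1 - x i / K)) ≤ min K (∑ i ∈ s, x i) := by
  classical
  set ones := s.filter (x · = 1)
  have hsum : ∑ i ∈ s, x i = #ones := by
    rw [← sum_boole]
    refine sum_congr rfl fun i hi => ?_
    rcases hx i hi with h | h <;> simp [h]
  have hprod : ∏ i ∈ s, (1 - x i / K) = (1 - K⁻¹) ^ #ones := by
    rw [← prod_const, prod_filter]
    refine prod_congr rfl fun i hi => ?_
    rcases hx i hi with h | h <;> simp [h]
  rw [hsum, hprod]
  exact mul_one_sub_one_sub_inv_pow_le_min hK _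

lemma integral_eq_of_forall_eq_zero_or_one {Ω : Type*} [MeasurableSpace Ω] {μ : Measure Ω}
    {X : Ω → ℝ} (hX : Measurable X) (h01 : ∀ ω, X ω = 0 ∨ X ω = 1) {p : ℝ} (hp : 0 ≤ p)
    (hXp : μ {ω | X ω = 1} = ENNReal.ofReal p) :
    ∫ ω, X ω ∂μ = p := by
  have hX_eq : X = {ω | X ω = 1}.indicator 1 := by
    ext ω
    rcases h01 ω with h | h <;> simp [h]
  rw [hX_eq, integral_indicator_one (s := {ω | X ω = 1}) (hX (measurableSet_singleton 1)),
    measureReal_def, hXp, ENNReal.toReal_ofReal hp]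

lemma ProbabilityTheory.iIndepFun.integral_finset_prod_comp {Ω ι β : Type*} [MeasurableSpace Ω]
    {μ : Measure Ω} [MeasurableSpace β] {X : ι → Ω → β} (hX : iIndepFun X μ)
    (hXm : ∀ i, Measurable (X i)) {f : β → ℝ} (hf : Measurable f) (s : Finset ι) :
    ∫ ω, ∏ i ∈ s, f (X i ω) ∂μ = ∏ i ∈ s, ∫ ω, f (X i ω) ∂μ := by
  simp_rw [← prod_attach s]
  exact (hX.precomp Subtype.val_injective).integral_fun_prod_comp
    (fun i => (hXm i).aemeasurable) fun _ => hf.aestronglyMeasurable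

lemma integral_prod_one_sub_div {Ω ι : Type*} [MeasurableSpace Ω] {μ : Measure Ω}
    [IsProbabilityMeasure μ] {X : ι → Ω → ℝ} {y : ι → ℝ} (hX : iIndepFun X μ)
    (hXm : ∀ i, Measurable (X i)) (h01 : ∀ i ω, X i ω = 0 ∨ X i ω = 1) (hy : ∀ i, 0 ≤ y i)
    (hXy : ∀ i, μ {ω | X i ω = 1} = ENNReal.ofReal (y i)) (K : ℝ) (s : Finset ι) :
    ∫ ω, ∏ i ∈ s, (1 - X i ω / K) ∂μ = ∏ i ∈ s, (1 - y i / K) := by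
  rw [hX.integral_finset_prod_comp hXm (f := fun x => 1 - x / K) (by fun_prop) s]
  refine prod_congr rfl fun i _ => ?_
  have hint : Integrable (X i) μ :=
    .of_mem_Icc 0 1 (hXm i).aemeasurable
      (ae_of_all _ fun ω => by rcases h01 i ω with h | h <;> simp [h])
  rw [integral_sub (integrable_const 1) (hint.div_const K), integral_div,
    integral_eq_of_forall_eq_zero_or_one (hXm i) (h01 i) (hy i) (hXy i)]
  simp

/-- For independent randomized rounding `R(y)` of `y ∈ [0,1]^N`, and any `S ⊆ [N]` and
positive integer `k`, `E[min{k, Sum_S(R(y))}] ≥ k (1 − exp(−Sum_S(y)/k))`. -/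
theorem stmt_0 {Ω : Type*} [MeasurableSpace Ω] (μ : Measure Ω) [IsProbabilityMeasure μ]
    (N : ℕ) (y : Fin N → ℝ) (hy : ∀ i, y i ∈ Set.Icc (0 : ℝ) 1)
    (X : Fin N → Ω → ℝ) (hXmeas : ∀ i, Measurable (X i))
    (hX01 : ∀ i ω, X i ω = 0 ∨ X i ω = 1)
    (hXmarg : ∀ i, μ {ω | X i ω = 1} = ENNReal.ofReal (y i))
    (hXindep : iIndepFun X μ)
    (S : Finset (Fin N)) (k : ℕ) (hk : 0 < k) :
    ∫ ω, min (k : ℝ) (∑ i ∈ S, X i ω) ∂μ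
      ≥ (k : ℝ) * (1 - Real.exp (-(∑ i ∈ S, y i) / k)) := by
  set K : ℝ := (k : ℝ)
  have hK : 1 ≤ K := Nat.one_le_cast.2 hk
  have hX_mem : ∀ i ω, X i ω ∈ Set.Icc (0 : ℝ) 1 := fun i ω => by
    rcases hX01 i ω with h | h <;> simp [h]
  have hfactor : ∀ i ω, 1 - X i ω / K ∈ Set.Icc (0 : ℝ) 1 := fun i ω =>
    one_sub_div_mem_Icc (hX_mem i ω) hK
  have hprod_int : Integrable (fun ω => ∏ i ∈ S, (1 - X i ω / K)) μ :=
    .of_mem_Icc 0 1 (by fun_prop) (ae_of_all _ fun ω =>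
      ⟨prod_nonneg fun i _ => (hfactor i ω).1,
        prod_le_one (fun i _ => (hfactor i ω).1) fun i _ => (hfactor i ω).2⟩)
  have hmin_int : Integrable (fun ω => min K (∑ i ∈ S, X i ω)) μ :=
    .of_mem_Icc 0 K (by fun_prop) (ae_of_all _ fun ω =>
      ⟨le_min (by linarith) (sum_nonneg fun i _ => (hX_mem i ω).1), min_le_left _ _⟩)
  calc K * (1 - Real.exp (-(∑ i ∈ S, y i) / K))
      ≤ K * (1 - ∏ i ∈ S, (1 - y i / K)) := by
        rw [neg_div, sum_div]
        gcongr
        exact prod_one_sub_le_exp_neg_sum S fun i _ =>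
          sub_nonneg.1 (one_sub_div_mem_Icc (hy i) hK).1
    _ = ∫ ω, K * (1 - ∏ i ∈ S, (1 - X i ω / K)) ∂μ := by
        rw [integral_const_mul, integral_sub (integrable_const 1) hprod_int,
          integral_prod_one_sub_div hXindep hXmeas hX01 (fun i => (hy i).1) hXmarg]
        simp
    _ ≤ ∫ ω, min K (∑ i ∈ S, X i ω) ∂μ :=
        integral_mono (((integrable_const 1).sub hprod_int).const_mul K) hmin_int fun ω =>
          mul_one_sub_prod_le_min_sum hK S fun i _ => hX01 i ω
end

section
/- Let X_1,...,X_n be independent Bernoulli random variables with P[X_i = 1] = z_i·k where z_i ∈ [0,1/k] (equivalently, parameters y_i ∈ [0,1] with z_i = y_i/k). Then E[min{k, Σ_i X_i}] ≥ k·(1 − Π_i (1 − y_i/k)). -/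
open MeasureTheory ProbabilityTheory

/-! Pointwise, for `x i ∈ [0, k]` the Weierstrass product inequality
`1 - ∑ aᵢ ≤ ∏ (1 - aᵢ)` gives `k (1 - ∏ (1 - x i / k)) ≤ min k (∑ x i)`. Taking expectations,
independence turns `E[∏ (1 - X i / k)]` into `∏ (1 - y i / k)`. -/

theorem Finset.one_sub_sum_le_prod_one_sub {ι R : Type*} [CommRing R] [LinearOrder R]
    [IsStrictOrderedRing R] (s : Finset ι) {a : ι → R} (h0 : ∀ i ∈ s, 0 ≤ a i)
    (h1 : ∀ i ∈ s, a i ≤ 1) :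
    1 - ∑ i ∈ s, a i ≤ ∏ i ∈ s, (1 - a i) := by
  induction s using Finset.cons_induction with
  | empty => simp
  | cons j s hj ih =>
    simp only [Finset.forall_mem_cons] at h0 h1
    rw [Finset.sum_cons, Finset.prod_cons]
    have hsum : 0 ≤ ∑ i ∈ s, a i := Finset.sum_nonneg h0.2
    nlinarith [ih h0.2 h1.2, mul_nonneg h0.1 hsum]

theorem mul_one_sub_prod_one_sub_div_le_min {ι : Type*} (s : Finset ι) {c : ℝ} (hc : 0 < c)
    {x : ι → ℝ} (hx : ∀ i ∈ s, x i ∈ Set.Icc 0 c) :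
    c * (1 - ∏ i ∈ s, (1 - x i / c)) ≤ min c (∑ i ∈ s, x i) := by
  have h0 : ∀ i ∈ s, 0 ≤ x i / c := fun i hi => div_nonneg (hx i hi).1 hc.le
  have h1 : ∀ i ∈ s, x i / c ≤ 1 := fun i hi => (div_le_one hc).2 (hx i hi).2
  have hprod : 0 ≤ ∏ i ∈ s, (1 - x i / c) :=
    Finset.prod_nonneg fun i hi => sub_nonneg.2 (h1 i hi)
  have hweier := s.one_sub_sum_le_prod_one_sub h0 h1
  rw [← Finset.sum_div] at hweier
  refine le_min (by nlinarith) ?_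
  calc c * (1 - ∏ i ∈ s, (1 - x i / c)) ≤ c * ((∑ i ∈ s, x i) / c) := by gcongr; linarith
    _ = ∑ i ∈ s, x i := mul_div_cancel₀ _ hc.ne'

theorem integral_eq_measureReal_of_eq_zero_or_one {Ω : Type*} [MeasurableSpace Ω]
    {μ : Measure Ω} {Z : Ω → ℝ} (hZ : Measurable Z) (h01 : ∀ ω, Z ω = 0 ∨ Z ω = 1) :
    ∫ ω, Z ω ∂μ = μ.real {ω | Z ω = 1} := by
  calc ∫ ω, Z ω ∂μ = ∫ ω, {ω | Z ω = 1}.indicator 1 ω ∂μ := by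
        congr 1; ext ω; rcases h01 ω with h | h <;> simp [h]
    _ = μ.real {ω | Z ω = 1} := integral_indicator_one (hZ (measurableSet_singleton 1))

theorem integrable_finsetProd_of_mem_Icc_zero_one {Ω ι : Type*} [MeasurableSpace Ω]
    {μ : Measure Ω} [IsFiniteMeasure μ] (s : Finset ι) {f : ι → Ω → ℝ}
    (hf : ∀ i ∈ s, AEStronglyMeasurable (f i) μ) (h01 : ∀ i ∈ s, ∀ ω, f i ω ∈ Set.Icc 0 1) :
    Integrable (fun ω => ∏ i ∈ s, f i ω) μ := by
  refine Integrable.of_bound (Finset.aestronglyMeasurable_fun_prod s hf) 1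
    (ae_of_all _ fun ω => ?_)
  rw [Real.norm_of_nonneg (Finset.prod_nonneg fun i hi => (h01 i hi ω).1)]
  exact Finset.prod_le_one (fun i hi => (h01 i hi ω).1) fun i hi => (h01 i hi ω).2

/-- Product-form bound for independent Bernoulli variables `X i` with `P[X i = 1] = y i`:
`E[min{k, Σ_i X_i}] ≥ k (1 − Π_i (1 − y_i/k))`. -/
theorem stmt_1 {Ω : Type*} [MeasurableSpace Ω] (μ : Measure Ω) [IsProbabilityMeasure μ]
    (n : ℕ) (y : Fin n → ℝ) (hy : ∀ i, y i ∈ Set.Icc (0 : ℝ) 1)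
    (X : Fin n → Ω → ℝ) (hXmeas : ∀ i, Measurable (X i))
    (hX01 : ∀ i ω, X i ω = 0 ∨ X i ω = 1)
    (hXmarg : ∀ i, μ {ω | X i ω = 1} = ENNReal.ofReal (y i))
    (hXindep : iIndepFun X μ)
    (k : ℕ) (hk : 0 < k) :
    ∫ ω, min (k : ℝ) (∑ i, X i ω) ∂μ ≥ (k : ℝ) * (1 - ∏ i, (1 - y i / k)) := by
  have hkpos : (0 : ℝ) < k := by exact_mod_cast hk
  have hXIcc : ∀ i ω, X i ω ∈ Set.Icc (0 : ℝ) k := fun i ω => by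
    have : (1 : ℝ) ≤ k := by exact_mod_cast hk
    rcases hX01 i ω with h | h <;> simp [h, this]
  have hfactor : ∀ i ω, 1 - X i ω / k ∈ Set.Icc (0 : ℝ) 1 := fun i ω =>
    ⟨sub_nonneg.2 ((div_le_one hkpos).2 (hXIcc i ω).2),
      sub_le_self _ (div_nonneg (hXIcc i ω).1 hkpos.le)⟩
  have hXint : ∀ i, Integrable (X i) μ := fun i =>
    Integrable.of_bound (hXmeas i).aestronglyMeasurable 1
      (ae_of_all _ fun ω => by rcases hX01 i ω with h | h <;> simp [h])
  have hmean : ∀ i, ∫ ω, (1 - X i ω / k) ∂μ = 1 - y i / k := fun i => by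
    rw [integral_sub (integrable_const 1) ((hXint i).div_const _), integral_div,
      integral_eq_measureReal_of_eq_zero_or_one (hXmeas i) (hX01 i), measureReal_def, hXmarg i,
      ENNReal.toReal_ofReal (hy i).1]
    simp
  have hprod : ∫ ω, ∏ i, (1 - X i ω / k) ∂μ = ∏ i, (1 - y i / k) := by
    rw [hXindep.integral_fun_prod_comp (f := fun _ t => 1 - t / (k : ℝ))
      (fun i => (hXmeas i).aemeasurable) (fun i => by fun_prop)]
    exact Finset.prod_congr rfl fun i _ => hmean i
  have hprod_int : Integrable (fun ω => ∏ i, (1 - X i ω / k)) μ :=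
    integrable_finsetProd_of_mem_Icc_zero_one _ (fun i _ => by fun_prop) fun i _ => hfactor i
  have hmin_int : Integrable (fun ω => min (k : ℝ) (∑ i, X i ω)) μ :=
    (integrable_const _).inf (integrable_finsetSum _ fun i _ => hXint i)
  calc (k : ℝ) * (1 - ∏ i, (1 - y i / k))
      = ∫ ω, (k : ℝ) * (1 - ∏ i, (1 - X i ω / k)) ∂μ := by
        rw [integral_const_mul, integral_sub (integrable_const 1) hprod_int, hprod]; simp
    _ ≤ ∫ ω, min (k : ℝ) (∑ i, X i ω) ∂μ :=
        integral_mono ((integrable_const _).sub hprod_int |>.const_mul _) hmin_int fun ω =>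
          mul_one_sub_prod_one_sub_div_le_min _ hkpos fun i _ => hXIcc i ω
end

section
/- Let g: {0,1}^n → ℝ be defined by g(x) = λ_{Σ_{i∈S} x_i} for a subset S of coordinates with |S| = s ≥ 2, where (λ_0,...,λ_s) satisfies λ_r − 2λ_{r+1} + λ_{r+2} ≤ 0 for all 0 ≤ r ≤ s−2. Fix two distinct indices i, j ∈ S and values v_p ∈ [0,1] for all p. Write Φ(v) = Σ_{ℓ=0}^{s} λ_ℓ Σ_{A⊆S, |A|=ℓ} Π_{a∈A} v_a · Π_{b∈S∖A}(1−v_b). Then Φ, viewed as a multilinear function, has coefficient u_3 of the monomial v_i·v_j (with other coordinates fixed) satisfying u_3 ≤ 0; specifically u_3 = Σ_{r=0}^{s−2} (λ_r − 2λ_{r+1} + λ_{r+2})·β_r where β_r = Σ_{B⊆S∖{i,j}, |B|=r} Π_{p∈B} v_p · Π_{q∈(S∖{i,j})∖B}(1−v_q) ≥ 0. -/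
/-!
Conditioning on how coordinates `i` and `j` are rounded writes `Φ` as an average, over the
rounding `B` of `S ∖ {i, j}`, of
`(1 - a)(1 - b) λ_|B| + (a(1 - b) + (1 - a)b) λ_{|B|+1} + ab λ_{|B|+2}`,
whose `ab`-coefficient is the second difference `λ_|B| - 2λ_{|B|+1} + λ_{|B|+2} ≤ 0`;
the averaging weights `β_r` are probabilities, hence nonnegative.
-/

open Finset

lemma Finset.insert_insert_sdiff_pair {α : Type*} [DecidableEq α] {S : Finset α} {i j : α}
    (hi : i ∈ S) (hj : j ∈ S) : insert i (insert j (S \ {i, j})) = S := by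
  rw [insert_eq j, ← insert_union,
    union_sdiff_of_subset (insert_subset hi (singleton_subset_iff.2 hj))]

section Rounding

variable {ι : Type*} [DecidableEq ι]

/-- The probability that independent rounding of `f` on `T` selects exactly `A`. -/
def roundingWeight (f : ι → ℝ) (T A : Finset ι) : ℝ :=
  (∏ p ∈ A, f p) * ∏ q ∈ T \ A, (1 - f q)

def roundingExpectation (c : ℕ → ℝ) (f : ι → ℝ) (T : Finset ι) : ℝ :=
  ∑ A ∈ T.powerset, c #A * roundingWeight f T A

lemma roundingWeight_nonneg {f : ι → ℝ} (hf : ∀ p, f p ∈ Set.Icc (0 : ℝ) 1) (T A : Finset ι) :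
    0 ≤ roundingWeight f T A :=
  mul_nonneg (prod_nonneg fun p _ => (hf p).1)
    (prod_nonneg fun q _ => sub_nonneg.2 (hf q).2)

lemma roundingWeight_insert {f : ι → ℝ} {T A : Finset ι} {i : ι} (hiT : i ∉ T) (hiA : i ∉ A) :
    roundingWeight f (insert i T) A = (1 - f i) * roundingWeight f T A := by
  rw [roundingWeight, roundingWeight, insert_sdiff_of_notMem _ hiA,
    prod_insert fun h => hiT (mem_sdiff.1 h).1]
  ring

lemma roundingWeight_insert_insert {f : ι → ℝ} {T A : Finset ι} {i : ι} (hiT : i ∉ T)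
    (hiA : i ∉ A) :
    roundingWeight f (insert i T) (insert i A) = f i * roundingWeight f T A := by
  rw [roundingWeight, roundingWeight, insert_sdiff_insert, sdiff_insert_of_notMem hiT,
    prod_insert hiA]
  ring

lemma roundingExpectation_congr {c : ℕ → ℝ} {f g : ι → ℝ} {T : Finset ι}
    (h : ∀ p ∈ T, f p = g p) : roundingExpectation c f T = roundingExpectation c g T := by
  refine sum_congr rfl fun A hA => ?_
  have hAT := mem_powerset.1 hA
  rw [roundingWeight, roundingWeight, prod_congr rfl fun p hp => h p (hAT hp),
    prod_congr rfl fun q hq => congrArg (1 - ·) (h q (mem_sdiff.1 hq).1)]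

lemma roundingExpectation_insert (c : ℕ → ℝ) (f : ι → ℝ) {T : Finset ι} {i : ι} (hiT : i ∉ T) :
    roundingExpectation c f (insert i T) =
      roundingExpectation (fun k => (1 - f i) * c k + f i * c (k + 1)) f T := by
  rw [roundingExpectation, sum_powerset_insert hiT, roundingExpectation, ← sum_add_distrib]
  refine sum_congr rfl fun A hA => ?_
  have hiA : i ∉ A := fun h => hiT (mem_powerset.1 hA h)
  rw [roundingWeight_insert hiT hiA, roundingWeight_insert_insert hiT hiA,
    card_insert_of_notMem hiA]
  ring

lemma roundingExpectation_eq_sum_range (c : ℕ → ℝ) (f : ι → ℝ) (T : Finset ι) :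
    roundingExpectation c f T =
      ∑ ℓ ∈ range (#T + 1), c ℓ * ∑ A ∈ T.powersetCard ℓ,
        (∏ p ∈ A, f p) * ∏ q ∈ T \ A, (1 - f q) := by
  rw [roundingExpectation, sum_powerset]
  refine sum_congr rfl fun ℓ _ => ?_
  rw [mul_sum]
  exact sum_congr rfl fun A hA => by rw [(mem_powersetCard.1 hA).2, roundingWeight]

end Rounding

theorem stmt_4_general {ι : Type*} [DecidableEq ι] (S : Finset ι)
    (lam : ℕ → ℝ)
    (hlam : ∀ r, r ≤ S.card - 2 → lam r - 2 * lam (r + 1) + lam (r + 2) ≤ 0)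
    (i j : ι) (hi : i ∈ S) (hj : j ∈ S) (hij : i ≠ j)
    (v : ι → ℝ) (hv : ∀ p, v p ∈ Set.Icc (0 : ℝ) 1) :
    (∀ r : ℕ,
      0 ≤ ∑ B ∈ (S \ {i, j}).powersetCard r,
            (∏ p ∈ B, v p) * ∏ q ∈ (S \ {i, j}) \ B, (1 - v q)) ∧
    (∑ r ∈ Finset.range (S.card - 1),
        (lam r - 2 * lam (r + 1) + lam (r + 2)) *
          ∑ B ∈ (S \ {i, j}).powersetCard r,
            (∏ p ∈ B, v p) * ∏ q ∈ (S \ {i, j}) \ B, (1 - v q)) ≤ 0 ∧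
    ∃ u0 u1 u2 : ℝ, ∀ a b : ℝ,
      (∑ ℓ ∈ Finset.range (S.card + 1), lam ℓ *
          ∑ A ∈ S.powersetCard ℓ,
            (∏ p ∈ A, Function.update (Function.update v i a) j b p) *
              ∏ q ∈ S \ A, (1 - Function.update (Function.update v i a) j b q))
        = u0 + u1 * a + u2 * b +
          (∑ r ∈ Finset.range (S.card - 1),
            (lam r - 2 * lam (r + 1) + lam (r + 2)) *
              ∑ B ∈ (S \ {i, j}).powersetCard r,
                (∏ p ∈ B, v p) * ∏ q ∈ (S \ {i, j}) \ B, (1 - v q)) * (a * b) := by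
  set T := S \ {i, j} with hT
  have hjT : j ∉ T := by simp [hT]
  have hiT : i ∉ insert j T := by simp [hT, hij]
  have hS : S = insert i (insert j T) := (insert_insert_sdiff_pair hi hj).symm
  have hcard : S.card - 1 = #T + 1 := by
    have := congrArg card hS
    rw [card_insert_of_notMem hiT, card_insert_of_notMem hjT] at this
    omega
  have hβ (r : ℕ) : 0 ≤ ∑ B ∈ T.powersetCard r, roundingWeight v T B :=
    sum_nonneg fun B _ => roundingWeight_nonneg hv T B
  refine ⟨hβ, sum_nonpos fun r hr =>
    mul_nonpos_of_nonpos_of_nonneg (hlam r (by rw [mem_range] at hr; omega)) (hβ r), ?_⟩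
  refine ⟨roundingExpectation lam v T,
    roundingExpectation (fun k => lam (k + 1) - lam k) v T,
    roundingExpectation (fun k => lam (k + 1) - lam k) v T, fun a b => ?_⟩
  have hu3 : roundingExpectation (fun r => lam r - 2 * lam (r + 1) + lam (r + 2)) v T =
      ∑ r ∈ range (S.card - 1), (lam r - 2 * lam (r + 1) + lam (r + 2)) *
        ∑ B ∈ T.powersetCard r, (∏ p ∈ B, v p) * ∏ q ∈ T \ B, (1 - v q) := by
    rw [hcard, roundingExpectation_eq_sum_range]
  rw [← hu3, ← roundingExpectation_eq_sum_range lam, hS, roundingExpectation_insert _ _ hiT,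
    roundingExpectation_insert _ _ hjT, roundingExpectation_congr (g := v) fun p hp => ?_]
  · simp only [Function.update_self, Function.update_of_ne hij, roundingExpectation, sum_mul,
      ← sum_add_distrib]
    exact sum_congr rfl fun B _ => by ring
  · rw [Function.update_of_ne (ne_of_mem_of_not_mem hp hjT),
      Function.update_of_ne (ne_of_mem_of_not_mem hp fun h => hiT (mem_insert_of_mem h))]

/-- The multilinear potential `Φ(v) = Σ_ℓ λ_ℓ Σ_{A⊆S,|A|=ℓ} Π_{a∈A} v_a Π_{b∈S∖A}(1−v_b)`,
viewed as a function of the coordinates `v_i, v_j` (`i ≠ j` in `S`), has the form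
`u₀ + u₁ v_i + u₂ v_j + u₃ v_i v_j` where
`u₃ = Σ_{r=0}^{s−2} (λ_r − 2λ_{r+1} + λ_{r+2}) β_r ≤ 0` with each `β_r ≥ 0`. -/
theorem stmt_4 {ι : Type*} [DecidableEq ι] (S : Finset ι) (hs : 2 ≤ S.card)
    (lam : ℕ → ℝ)
    (hlam : ∀ r, r ≤ S.card - 2 → lam r - 2 * lam (r + 1) + lam (r + 2) ≤ 0)
    (i j : ι) (hi : i ∈ S) (hj : j ∈ S) (hij : i ≠ j)
    (v : ι → ℝ) (hv : ∀ p, v p ∈ Set.Icc (0 : ℝ) 1) :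
    (∀ r : ℕ,
      0 ≤ ∑ B ∈ (S \ {i, j}).powersetCard r,
            (∏ p ∈ B, v p) * ∏ q ∈ (S \ {i, j}) \ B, (1 - v q)) ∧
    (∑ r ∈ Finset.range (S.card - 1),
        (lam r - 2 * lam (r + 1) + lam (r + 2)) *
          ∑ B ∈ (S \ {i, j}).powersetCard r,
            (∏ p ∈ B, v p) * ∏ q ∈ (S \ {i, j}) \ B, (1 - v q)) ≤ 0 ∧
    ∃ u0 u1 u2 : ℝ, ∀ a b : ℝ,
      (∑ ℓ ∈ Finset.range (S.card + 1), lam ℓ *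
          ∑ A ∈ S.powersetCard ℓ,
            (∏ p ∈ A, Function.update (Function.update v i a) j b p) *
              ∏ q ∈ S \ A, (1 - Function.update (Function.update v i a) j b q))
        = u0 + u1 * a + u2 * b +
          (∑ r ∈ Finset.range (S.card - 1),
            (lam r - 2 * lam (r + 1) + lam (r + 2)) *
              ∑ B ∈ (S \ {i, j}).powersetCard r,
                (∏ p ∈ B, v p) * ∏ q ∈ (S \ {i, j}) \ B, (1 - v q)) * (a * b) :=
  stmt_4_general S lam hlam i j hi hj hij v hv
end

section
/- There exists γ_0 ∈ (1, 2) such that γ_0 = (1/e + 2/e^{γ_0})·(1 + 1/(γ_0 − 1)), and this γ_0 satisfies γ_0 < 1.7245. -/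
/-!
Rewriting the equation as `1/e + 2/e^γ = γ - 1`, the left side minus the right side is continuous,
positive (`3/e`) at `γ = 1` and negative at `γ = 1.7245`, so the intermediate value
theorem gives a root in between. The sign at `1.7245` comes from `e > 2.7182818283` together with a
six-term Taylor lower bound for `exp 0.7245`.
-/

open Real Set

lemma eq_mul_one_add_one_div_sub_one {x c : ℝ} (hx : x ≠ 1) (h : c = x - 1) :
    x = c * (1 + 1 / (x - 1)) := by
  have : x - 1 ≠ 0 := sub_ne_zero.mpr hx
  rw [h, mul_add, mul_one_div_cancel this]
  ring

lemma lt_exp_0_7245 : (2.0634752 : ℝ) < exp 0.7245 := by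
  have hsum : (2.0634752 : ℝ) < ∑ i ∈ Finset.range 6, (0.7245 : ℝ) ^ i / i.factorial := by
    norm_num [Finset.sum_range_succ, Nat.factorial]
  exact hsum.trans_le (sum_le_exp_of_nonneg (by norm_num) 6)

lemma lt_exp_1_7245 : (5.6089 : ℝ) < exp 1.7245 := by
  have hsplit : exp 1.7245 = exp 1 * exp 0.7245 := by rw [← exp_add]; norm_num
  rw [hsplit]
  nlinarith [exp_one_gt_d9, lt_exp_0_7245, exp_pos 0.7245]

lemma one_div_exp_one_add_two_div_exp_lt : 1 / exp 1 + 2 / exp 1.7245 < 1.7245 - 1 := by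
  have h₁ : 1 / exp 1 < 0.3678795 := by
    rw [div_lt_iff₀ (exp_pos 1)]; nlinarith [exp_one_gt_d9]
  have h₂ : 2 / exp 1.7245 < 0.356577 := by
    rw [div_lt_iff₀ (exp_pos 1.7245)]; nlinarith [lt_exp_1_7245]
  linarith

lemma exists_one_div_exp_one_add_two_div_exp_eq_sub_one :
    ∃ x ∈ Ioo (1 : ℝ) 1.7245, 1 / exp 1 + 2 / exp x = x - 1 := by
  set f : ℝ → ℝ := fun x => 1 / exp 1 + 2 / exp x - (x - 1) with hf
  have hcont : ContinuousOn f (Icc 1 1.7245) :=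
    ((continuous_const.add (continuous_const.div continuous_exp fun x => (exp_pos x).ne')).sub
      (continuous_id.sub continuous_const)).continuousOn
  have hf₁ : 0 < f 1 := by simp only [hf, sub_self, sub_zero]; positivity
  have hf₂ : f 1.7245 < 0 := by
    simp only [hf]; linarith [one_div_exp_one_add_two_div_exp_lt]
  obtain ⟨x, hx, hfx⟩ := intermediate_value_Ioo' (by norm_num) hcont ⟨hf₂, hf₁⟩
  exact ⟨x, hx, sub_eq_zero.mp hfx⟩

theorem stmt_10 : ∃ γ₀ : ℝ, 1 < γ₀ ∧ γ₀ < 2 ∧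
    γ₀ = (1 / Real.exp 1 + 2 / Real.exp γ₀) * (1 + 1 / (γ₀ - 1)) ∧ γ₀ < 1.7245 := by
  obtain ⟨γ₀, ⟨hγ₁, hγ₂⟩, hroot⟩ := exists_one_div_exp_one_add_two_div_exp_eq_sub_one
  exact ⟨γ₀, hγ₁, by linarith, eq_mul_one_add_one_div_sub_one hγ₁.ne' hroot, hγ₂⟩
end

section
/- Let (λ_0,...,λ_s) satisfy λ_r − 2λ_{r+1} + λ_{r+2} ≤ 0 for all 0 ≤ r ≤ s−2 (s ≥ 2), and let dependent rounding be applied to y ∈ [0,1]^N producing ŷ ∈ {0,1}^N, with R(y) denoting independent rounding. Then for any S ⊆ [N] with |S| = s, E[λ_{Sum_S(ŷ)}] ≥ E[λ_{Sum_S(R(y))}], where Sum_S(x) = Σ_{i∈S} x_i. -/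
open MeasureTheory ProbabilityTheory Finset

/-!
Write `F x = ∑_{A ⊆ S} λ_{|A|} ∏_{a ∈ A} x_a ∏_{b ∈ S \ A} (1 - x_b)` for the expectation of
`λ_{Sum_S}` under independent rounding of `x`. A dependent-rounding step changes only `x_i, x_j`
and keeps `x_i + x_j`; since `F` is affine in each coordinate, `F` changes by
`a(x) (x'_i - x_i) + c(x) (x'_i x'_j - x_i x_j)`, where `a, c` only see the other coordinates and
`c` is either `0` or the multilinear extension of the second difference of `λ`, hence `c ≤ 0`.
Conditionally on the current state the first term has mean zero (marginals are preserved) and the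
second has nonnegative mean (negative correlation), so `E[F(v_t)]` is nondecreasing in `t`. It
starts at `F y`, the right-hand side, and ends at `E[λ_{Sum_S(ŷ)}]`, since `F` agrees with
`λ_{Sum_S}` on `{0,1}^N`.
-/

noncomputable def multilinearExt {ι : Type*} [DecidableEq ι] (S : Finset ι) (lam : ℕ → ℝ)
    (x : ι → ℝ) : ℝ :=
  ∑ A ∈ S.powerset, lam #A * ((∏ a ∈ A, x a) * ∏ b ∈ S \ A, (1 - x b))

section MultilinearExt

variable {ι : Type*} [DecidableEq ι] {S T : Finset ι} {lam : ℕ → ℝ} {x x' : ι → ℝ} {i j : ι}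

theorem continuous_multilinearExt (S : Finset ι) (lam : ℕ → ℝ) :
    Continuous (multilinearExt S lam) := by
  unfold multilinearExt
  fun_prop

theorem multilinearExt_congr (h : ∀ p ∈ S, x' p = x p) :
    multilinearExt S lam x' = multilinearExt S lam x := by
  refine sum_congr rfl fun A hA => ?_
  have hAS := mem_powerset.mp hA
  congr 2
  · exact prod_congr rfl fun a ha => h a (hAS ha)
  · exact prod_congr rfl fun b hb => by rw [h b (mem_sdiff.mp hb).1]

theorem multilinearExt_empty : multilinearExt ∅ lam x = lam 0 := by
  simp [multilinearExt]

theorem multilinearExt_insert (hi : i ∉ T) :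
    multilinearExt (insert i T) lam x =
      (1 - x i) * multilinearExt T lam x + x i * multilinearExt T (fun r => lam (r + 1)) x := by
  rw [multilinearExt, sum_powerset_insert hi, multilinearExt, multilinearExt, mul_sum, mul_sum]
  congr 1 <;> refine sum_congr rfl fun A hA => ?_
  · have hiA : i ∉ A := fun h => hi (mem_powerset.mp hA h)
    rw [insert_sdiff_of_notMem _ hiA, prod_insert fun h => hi (mem_sdiff.mp h).1]
    ring
  · have hiA : i ∉ A := fun h => hi (mem_powerset.mp hA h)
    rw [insert_sdiff_insert, sdiff_insert_of_notMem hi, prod_insert hiA,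
      card_insert_of_notMem hiA]
    ring

theorem multilinearExt_erase (hi : i ∈ S) :
    multilinearExt S lam x = (1 - x i) * multilinearExt (S.erase i) lam x
      + x i * multilinearExt (S.erase i) (fun r => lam (r + 1)) x := by
  conv_lhs => rw [← insert_erase hi]
  exact multilinearExt_insert (notMem_erase i S)

theorem multilinearExt_of_boolean (hx : ∀ p ∈ S, x p = 0 ∨ x p = 1) :
    multilinearExt S lam x = lam #{p ∈ S | x p = 1} := by
  induction S using Finset.induction_on generalizing lam with
  | empty => exact multilinearExt_empty
  | insert i T hi ih =>
    have hT (g : ℕ → ℝ) := ih (lam := g) fun p hp => hx p (mem_insert_of_mem hp)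
    rw [multilinearExt_insert hi, filter_insert, hT, hT]
    rcases hx i (mem_insert_self i T) with h | h
    · simp [h]
    · simp [h, card_insert_of_notMem fun hmem => hi (mem_filter.mp hmem).1]

theorem multilinearExt_nonpos (hlam : ∀ r ≤ #S, lam r ≤ 0) (hx : x ∈ Set.Icc 0 1) :
    multilinearExt S lam x ≤ 0 :=
  sum_nonpos fun _ hA => mul_nonpos_of_nonpos_of_nonneg
    (hlam _ (card_le_card (mem_powerset.mp hA)))
    (mul_nonneg (prod_nonneg fun a _ => hx.1 a)
      (prod_nonneg fun b _ => sub_nonneg.mpr (hx.2 b)))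

theorem multilinearExt_sub_two_mul_add :
    multilinearExt S lam x - 2 * multilinearExt S (fun r => lam (r + 1)) x
        + multilinearExt S (fun r => lam (r + 2)) x
      = multilinearExt S (fun r => lam r - 2 * lam (r + 1) + lam (r + 2)) x := by
  simp only [multilinearExt, mul_sum, ← sum_sub_distrib, ← sum_add_distrib]
  exact sum_congr rfl fun _ _ => by ring

theorem multilinearExt_insert_insert (hi : i ∉ T) (hj : j ∉ T) (hij : i ≠ j) :
    multilinearExt (insert i (insert j T)) lam x = multilinearExt T lam x
      + (x i + x j) * (multilinearExt T (fun r => lam (r + 1)) x - multilinearExt T lam x)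
      + x i * x j * multilinearExt T (fun r => lam r - 2 * lam (r + 1) + lam (r + 2)) x := by
  rw [multilinearExt_insert (by simp [hij, hi]), multilinearExt_insert hj (lam := lam),
    multilinearExt_insert hj (lam := fun r => lam (r + 1)), ← multilinearExt_sub_two_mul_add]
  ring

theorem multilinearExt_update_pair (hi : i ∈ S) (hj : j ∈ S) (hij : i ≠ j)
    (hoff : ∀ p, p ≠ i → p ≠ j → x' p = x p) (hsum : x' i + x' j = x i + x j) :
    multilinearExt S lam x' = multilinearExt S lam x + (x' i * x' j - x i * x j) *
      multilinearExt ((S.erase i).erase j) (fun r => lam r - 2 * lam (r + 1) + lam (r + 2)) x := by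
  set T := (S.erase i).erase j
  have hS : S = insert i (insert j T) := by
    rw [insert_erase (mem_erase.mpr ⟨hij.symm, hj⟩), insert_erase hi]
  have hT (g : ℕ → ℝ) : multilinearExt T g x' = multilinearExt T g x :=
    multilinearExt_congr fun p hp => hoff p (ne_of_mem_erase (mem_of_mem_erase hp))
      (ne_of_mem_erase hp)
  have hiT : i ∉ T := fun h => notMem_erase i S (mem_of_mem_erase h)
  have hjT : j ∉ T := notMem_erase j _
  rw [hS, multilinearExt_insert_insert hiT hjT hij, multilinearExt_insert_insert hiT hjT hij,
    hT, hT, hT]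
  linear_combination (multilinearExt T (fun r => lam (r + 1)) x - multilinearExt T lam x) * hsum

theorem multilinearExt_update_single (hi : i ∈ S) (hoff : ∀ p ∈ S.erase i, x' p = x p) :
    multilinearExt S lam x' = multilinearExt S lam x + (x' i - x i) *
      (multilinearExt (S.erase i) (fun r => lam (r + 1)) x - multilinearExt (S.erase i) lam x) := by
  rw [multilinearExt_erase hi, multilinearExt_erase hi (x := x), multilinearExt_congr hoff,
    multilinearExt_congr hoff]
  ring

theorem multilinearExt_exists_step_decomposition (S : Finset ι) (lam : ℕ → ℝ)
    (hlam : ∀ r, r ≤ #S - 2 → lam r - 2 * lam (r + 1) + lam (r + 2) ≤ 0) (hij : i ≠ j) :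
    ∃ a c : (ι → ℝ) → ℝ, Continuous a ∧ Continuous c ∧ (∀ x ∈ Set.Icc 0 1, c x ≤ 0) ∧
      ∀ x x' : ι → ℝ, (∀ p, p ≠ i → p ≠ j → x' p = x p) → x' i + x' j = x i + x j →
        multilinearExt S lam x' =
          multilinearExt S lam x + a x * (x' i - x i) + c x * (x' i * x' j - x i * x j) := by
  by_cases hi : i ∈ S <;> by_cases hj : j ∈ S
  · refine ⟨0, multilinearExt ((S.erase i).erase j) fun r => lam r - 2 * lam (r + 1) + lam (r + 2),
      continuous_const, continuous_multilinearExt _ _,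
      fun x hx => multilinearExt_nonpos (fun r hr => hlam r ?_) hx,
      fun x x' hoff hsum => ?_⟩
    · rw [card_erase_of_mem (mem_erase.mpr ⟨hij.symm, hj⟩), card_erase_of_mem hi] at hr
      omega
    · rw [multilinearExt_update_pair hi hj hij hoff hsum, Pi.zero_apply]
      ring
  · refine ⟨multilinearExt (S.erase i) (fun r => lam (r + 1)) - multilinearExt (S.erase i) lam, 0,
      (continuous_multilinearExt _ _).sub (continuous_multilinearExt _ _),
      continuous_const, fun _ _ => le_rfl, fun x x' hoff hsum => ?_⟩
    rw [multilinearExt_update_single hi fun p hp =>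
      hoff p (ne_of_mem_erase hp) fun hpj => hj (hpj ▸ mem_of_mem_erase hp)]
    simp only [Pi.sub_apply, Pi.zero_apply]
    ring
  · refine ⟨-(multilinearExt (S.erase j) (fun r => lam (r + 1)) -
      multilinearExt (S.erase j) lam), 0,
      ((continuous_multilinearExt _ _).sub (continuous_multilinearExt _ _)).neg,
      continuous_const, fun _ _ => le_rfl, fun x x' hoff hsum => ?_⟩
    rw [multilinearExt_update_single hj fun p hp =>
      hoff p (fun hpi => hi (hpi ▸ mem_of_mem_erase hp)) (ne_of_mem_erase hp)]
    simp only [Pi.neg_apply, Pi.sub_apply, Pi.zero_apply]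
    linear_combination (multilinearExt (S.erase j) (fun r => lam (r + 1)) x -
      multilinearExt (S.erase j) lam x) * hsum
  · refine ⟨0, 0, continuous_const, continuous_const, fun _ _ => le_rfl,
      fun x x' hoff _ => ?_⟩
    rw [multilinearExt_congr fun p hp =>
      hoff p (fun hpi => hi (hpi ▸ hp)) fun hpj => hj (hpj ▸ hp)]
    simp

theorem multilinearExt_eq_sum_powersetCard (S : Finset ι) (lam : ℕ → ℝ) (x : ι → ℝ) :
    multilinearExt S lam x = ∑ ℓ ∈ range (#S + 1),
      lam ℓ * ∑ A ∈ S.powersetCard ℓ, (∏ a ∈ A, x a) * ∏ b ∈ S \ A, (1 - x b) := by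
  rw [multilinearExt, powerset_card_disjiUnion]
  refine (sum_disjiUnion ..).trans ?_
  simp_rw [mul_sum]
  exact sum_congr rfl fun ℓ _ => sum_congr rfl fun A hA => by rw [(mem_powersetCard.mp hA).2]

theorem multilinearExt_eq_sum_ite_of_boolean (hx : ∀ p ∈ S, x p = 0 ∨ x p = 1) :
    multilinearExt S lam x =
      ∑ ℓ ∈ range (#S + 1), if ∑ p ∈ S, x p = (ℓ : ℝ) then lam ℓ else 0 := by
  have hsum : ∑ p ∈ S, x p = #{p ∈ S | x p = 1} := by
    rw [natCast_card_filter]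
    refine sum_congr rfl fun p hp => ?_
    rcases hx p hp with h | h <;> simp [h]
  rw [multilinearExt_of_boolean hx, hsum]
  simp_rw [Nat.cast_inj]
  exact (sum_ite_eq_of_mem _ _ _ (mem_range.mpr (Nat.lt_succ_of_le (card_filter_le _ _)))).symm

end MultilinearExt

section ConditionalExpectation

variable {Ω : Type*} {m m₀ : MeasurableSpace Ω} {μ : Measure Ω} {g X Y : Ω → ℝ}

theorem integral_mul_eq_integral_mul_condExp (hm : m ≤ m₀) [SigmaFinite (μ.trim hm)]
    (hg : StronglyMeasurable[m] g) (hgX : Integrable (fun ω => g ω * X ω) μ)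
    (hX : Integrable X μ) :
    ∫ ω, g ω * X ω ∂μ = ∫ ω, g ω * μ[X | m] ω ∂μ :=
  calc ∫ ω, g ω * X ω ∂μ = ∫ ω, μ[g * X | m] ω ∂μ := (integral_condExp hm).symm
    _ = ∫ ω, g ω * μ[X | m] ω ∂μ :=
      integral_congr_ae (condExp_mul_of_stronglyMeasurable_left hg hgX hX)

theorem integral_mul_eq_of_condExp_eq (hm : m ≤ m₀) [SigmaFinite (μ.trim hm)]
    (hg : StronglyMeasurable[m] g) (hgX : Integrable (fun ω => g ω * X ω) μ)
    (hX : Integrable X μ) (hXY : μ[X | m] =ᵐ[μ] Y) :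
    ∫ ω, g ω * X ω ∂μ = ∫ ω, g ω * Y ω ∂μ := by
  rw [integral_mul_eq_integral_mul_condExp hm hg hgX hX]
  exact integral_congr_ae (hXY.mono fun ω h => congrArg (g ω * ·) h)

theorem integral_mul_le_of_condExp_le (hm : m ≤ m₀) [SigmaFinite (μ.trim hm)]
    (hg : StronglyMeasurable[m] g) (hg_nonpos : ∀ ω, g ω ≤ 0)
    (hgX : Integrable (fun ω => g ω * X ω) μ) (hX : Integrable X μ)
    (hgY : Integrable (fun ω => g ω * Y ω) μ) (hXY : μ[X | m] ≤ᵐ[μ] Y) :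
    ∫ ω, g ω * Y ω ∂μ ≤ ∫ ω, g ω * X ω ∂μ := by
  rw [integral_mul_eq_integral_mul_condExp hm hg hgX hX]
  exact integral_mono_ae hgY
    (integrable_condExp.congr (condExp_mul_of_stronglyMeasurable_left hg hgX hX))
    (hXY.mono fun ω h => mul_le_mul_of_nonpos_left h (hg_nonpos ω))

end ConditionalExpectation

theorem integrable_comp_of_isCompact {Ω E : Type*} [MeasurableSpace Ω] {μ : Measure Ω}
    [IsFiniteMeasure μ] [TopologicalSpace E] [MeasurableSpace E] [OpensMeasurableSpace E]
    {K : Set E} (hK : IsCompact K) {f : E → ℝ} (hf : Continuous f) {X : Ω → E}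
    (hX : Measurable X) (hXK : ∀ ω, X ω ∈ K) :
    Integrable (fun ω => f (X ω)) μ := by
  obtain ⟨C, hC⟩ := hK.exists_bound_of_continuousOn hf.continuousOn
  exact .of_bound (hf.measurable.comp hX).aestronglyMeasurable C
    (ae_of_all _ fun ω => hC _ (hXK ω))

theorem integral_comp_le_of_step {Ω ι : Type*} [MeasurableSpace Ω] {μ : Measure Ω}
    [IsFiniteMeasure μ] [Countable ι] {Φ a c : (ι → ℝ) → ℝ} (hΦ : Continuous Φ)
    (ha : Continuous a) (hc : Continuous c) (hc_nonpos : ∀ x ∈ Set.Icc 0 1, c x ≤ 0)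
    {V V' : Ω → ι → ℝ} (hV : Measurable V) (hV' : Measurable V')
    (hV01 : ∀ ω, V ω ∈ Set.Icc 0 1) (hV'01 : ∀ ω, V' ω ∈ Set.Icc 0 1) {i j : ι}
    (hstep : ∀ ω, Φ (V' ω) = Φ (V ω) + a (V ω) * (V' ω i - V ω i)
      + c (V ω) * (V' ω i * V' ω j - V ω i * V ω j))
    (hmarg : μ[fun ω => V' ω i | MeasurableSpace.comap V inferInstance] =ᵐ[μ] fun ω => V ω i)
    (hcov : μ[fun ω => V' ω i * V' ω j | MeasurableSpace.comap V inferInstance]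
      ≤ᵐ[μ] fun ω => V ω i * V ω j) :
    ∫ ω, Φ (V ω) ∂μ ≤ ∫ ω, Φ (V' ω) ∂μ := by
  have hm := hV.comap_le
  have hVm : Measurable[MeasurableSpace.comap V inferInstance] V := comap_measurable V
  have hint (f : (ι → ℝ) × (ι → ℝ) → ℝ) (hf : Continuous f) :
      Integrable (fun ω => f (V ω, V' ω)) μ :=
    integrable_comp_of_isCompact (isCompact_Icc.prod isCompact_Icc) hf (hV.prodMk hV')
      fun ω => ⟨hV01 ω, hV'01 ω⟩
  have hΦV : Integrable (fun ω => Φ (V ω)) μ := hint (fun w => Φ w.1) (by fun_prop)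
  have haV' : Integrable (fun ω => a (V ω) * V' ω i) μ :=
    hint (fun w => a w.1 * w.2 i) (by fun_prop)
  have haV : Integrable (fun ω => a (V ω) * V ω i) μ :=
    hint (fun w => a w.1 * w.1 i) (by fun_prop)
  have hcV' : Integrable (fun ω => c (V ω) * (V' ω i * V' ω j)) μ :=
    hint (fun w => c w.1 * (w.2 i * w.2 j)) (by fun_prop)
  have hcV : Integrable (fun ω => c (V ω) * (V ω i * V ω j)) μ :=
    hint (fun w => c w.1 * (w.1 i * w.1 j)) (by fun_prop)
  have hmargI : ∫ ω, a (V ω) * V' ω i ∂μ = ∫ ω, a (V ω) * V ω i ∂μ :=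
    integral_mul_eq_of_condExp_eq hm (ha.measurable.comp hVm).stronglyMeasurable haV'
      (hint (fun w => w.2 i) (by fun_prop)) hmarg
  have hcovI : ∫ ω, c (V ω) * (V ω i * V ω j) ∂μ ≤ ∫ ω, c (V ω) * (V' ω i * V' ω j) ∂μ :=
    integral_mul_le_of_condExp_le hm (hc.measurable.comp hVm).stronglyMeasurable
      (fun ω => hc_nonpos _ (hV01 ω)) hcV' (hint (fun w => w.2 i * w.2 j) (by fun_prop))
      hcV hcov
  have hsplit : ∫ ω, Φ (V' ω) ∂μ = ∫ ω, Φ (V ω) ∂μ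
      + (∫ ω, a (V ω) * V' ω i ∂μ - ∫ ω, a (V ω) * V ω i ∂μ)
      + (∫ ω, c (V ω) * (V' ω i * V' ω j) ∂μ - ∫ ω, c (V ω) * (V ω i * V ω j) ∂μ) := by
    simp_rw [hstep, mul_sub]
    rw [integral_add, integral_add, integral_sub haV' haV, integral_sub hcV' hcV]
    exacts [hΦV, haV'.sub haV, hΦV.add (haV'.sub haV), hcV'.sub hcV]
  linarith

theorem stmt_13_general {Ω : Type*} [MeasurableSpace Ω] (μ : Measure Ω) [IsProbabilityMeasure μ]
    (N m : ℕ) (y : Fin N → ℝ)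
    (v : ℕ → Ω → Fin N → ℝ)
    (hvmeas : ∀ t, Measurable (v t))
    (hv0 : ∀ ω, v 0 ω = y)
    (hvrange : ∀ t ω i, v t ω i ∈ Set.Icc (0 : ℝ) 1)
    (hstep : ∀ t < m, ∃ i j : Fin N, i ≠ j ∧
      (∀ ω, ∀ p, p ≠ i → p ≠ j → v (t + 1) ω p = v t ω p) ∧
      (∀ ω, v (t + 1) ω i + v (t + 1) ω j = v t ω i + v t ω j) ∧
      (μ[(fun ω => v (t + 1) ω i) | MeasurableSpace.comap (v t) inferInstance]
        =ᵐ[μ] fun ω => v t ω i) ∧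
      (μ[(fun ω => v (t + 1) ω i * v (t + 1) ω j) | MeasurableSpace.comap (v t) inferInstance]
        ≤ᵐ[μ] fun ω => v t ω i * v t ω j))
    (h01 : ∀ ω i, v m ω i = 0 ∨ v m ω i = 1)
    (S : Finset (Fin N))
    (lam : ℕ → ℝ)
    (hlam : ∀ r, r ≤ S.card - 2 → lam r - 2 * lam (r + 1) + lam (r + 2) ≤ 0) :
    ∫ ω, (∑ ℓ ∈ Finset.range (S.card + 1),
            if (∑ i ∈ S, v m ω i) = (ℓ : ℝ) then lam ℓ else 0) ∂μ
      ≥ ∑ ℓ ∈ Finset.range (S.card + 1), lam ℓ *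
          ∑ A ∈ S.powersetCard ℓ, (∏ a ∈ A, y a) * ∏ b ∈ S \ A, (1 - y b) := by
  have hcube (t : ℕ) (ω : Ω) : v t ω ∈ Set.Icc 0 1 :=
    ⟨fun i => (hvrange t ω i).1, fun i => (hvrange t ω i).2⟩
  have hmono (t : ℕ) (ht : t < m) :
      ∫ ω, multilinearExt S lam (v t ω) ∂μ ≤ ∫ ω, multilinearExt S lam (v (t + 1) ω) ∂μ := by
    obtain ⟨i, j, hij, hoff, hsum, hmarg, hcov⟩ := hstep t ht
    obtain ⟨a, c, ha, hc, hc_nonpos, hF⟩ :=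
      multilinearExt_exists_step_decomposition S lam hlam hij
    exact integral_comp_le_of_step (continuous_multilinearExt S lam) ha hc hc_nonpos
      (hvmeas t) (hvmeas (t + 1)) (hcube t) (hcube (t + 1))
      (fun ω => hF _ _ (hoff ω) (hsum ω)) hmarg hcov
  have hchain (t : ℕ) (ht : t ≤ m) :
      ∫ ω, multilinearExt S lam (v 0 ω) ∂μ ≤ ∫ ω, multilinearExt S lam (v t ω) ∂μ := by
    induction t with
    | zero => exact le_rfl
    | succ t ih => exact (ih (by omega)).trans (hmono t (by omega))
  have hstart : ∫ ω, multilinearExt S lam (v 0 ω) ∂μ = multilinearExt S lam y := by simp [hv0]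
  have hend : ∫ ω, multilinearExt S lam (v m ω) ∂μ = ∫ ω, (∑ ℓ ∈ Finset.range (S.card + 1),
      if (∑ i ∈ S, v m ω i) = (ℓ : ℝ) then lam ℓ else 0) ∂μ :=
    integral_congr_ae (ae_of_all _ fun ω =>
      multilinearExt_eq_sum_ite_of_boolean fun i _ => h01 ω i)
  rw [ge_iff_le, ← multilinearExt_eq_sum_powersetCard, ← hend, ← hstart]
  exact hchain m le_rfl

/-- Theorem 1 of the paper: if `(λ_0,…)` is discretely concave
(`λ_r − 2λ_{r+1} + λ_{r+2} ≤ 0`), then dependent rounding — axiomatized as a process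
`v 0 = y, …, v m = ŷ ∈ {0,1}^N` in which each step alters only two coordinates,
preserves their sum surely, preserves their conditional expectations given the current
state, and is negatively correlated on the altered pair — yields
`E[λ_{Sum_S(ŷ)}] ≥ E[λ_{Sum_S(R(y))}]`, where the right-hand side is the multilinear
extension `Σ_ℓ λ_ℓ Σ_{A⊆S,|A|=ℓ} Π_{a∈A} y_a Π_{b∈S∖A}(1−y_b)`, i.e. the expectation
under independent rounding. -/
theorem stmt_13 {Ω : Type*} [MeasurableSpace Ω] (μ : Measure Ω) [IsProbabilityMeasure μ]
    (N m : ℕ) (y : Fin N → ℝ) (hy : ∀ i, y i ∈ Set.Icc (0 : ℝ) 1)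
    (v : ℕ → Ω → Fin N → ℝ)
    (hvmeas : ∀ t, Measurable (v t))
    (hv0 : ∀ ω, v 0 ω = y)
    (hvrange : ∀ t ω i, v t ω i ∈ Set.Icc (0 : ℝ) 1)
    (hstep : ∀ t < m, ∃ i j : Fin N, i ≠ j ∧
      (∀ ω, ∀ p, p ≠ i → p ≠ j → v (t + 1) ω p = v t ω p) ∧
      (∀ ω, v (t + 1) ω i + v (t + 1) ω j = v t ω i + v t ω j) ∧
      (μ[(fun ω => v (t + 1) ω i) | MeasurableSpace.comap (v t) inferInstance]
        =ᵐ[μ] fun ω => v t ω i) ∧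
      (μ[(fun ω => v (t + 1) ω i * v (t + 1) ω j) | MeasurableSpace.comap (v t) inferInstance]
        ≤ᵐ[μ] fun ω => v t ω i * v t ω j))
    (h01 : ∀ ω i, v m ω i = 0 ∨ v m ω i = 1)
    (S : Finset (Fin N)) (hS : 2 ≤ S.card)
    (lam : ℕ → ℝ)
    (hlam : ∀ r, r ≤ S.card - 2 → lam r - 2 * lam (r + 1) + lam (r + 2) ≤ 0) :
    ∫ ω, (∑ ℓ ∈ Finset.range (S.card + 1),
            if (∑ i ∈ S, v m ω i) = (ℓ : ℝ) then lam ℓ else 0) ∂μ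
      ≥ ∑ ℓ ∈ Finset.range (S.card + 1), lam ℓ *
          ∑ A ∈ S.powersetCard ℓ, (∏ a ∈ A, y a) * ∏ b ∈ S \ A, (1 - y b) :=
  stmt_13_general μ N m y v hvmeas hv0 hvrange hstep h01 S lam hlam
end

section
/- Let X be a {0,1}-valued random variable with P[X=1] = y_1 and let Y be a nonnegative integer-valued random variable independent of X, and let k ≥ 1 be an integer. Then E[min{k, X + Y}] ≥ y_1 + (1 − y_1/k)·E[min{k, Y}]. -/
open MeasureTheory ProbabilityTheory

/-! Conditioning on `X`: on `{X = 0}` both sides agree pointwise, while on `{X = 1}`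
`min k (1 + Y) = 1 + min (k - 1) Y ≥ 1 + (1 - 1/k) min k Y`. Hence
`min k (X + Y) ≥ X + (1 - X/k) min k Y` pointwise, and integrating, with
`E[X · min k Y] = y₁ E[min k Y]` by independence, gives the bound. -/

lemma div_mul_min_le_min_sub_one {k t : ℝ} (hk : 1 ≤ k) (ht : 0 ≤ t) :
    (k - 1) / k * min k t ≤ min (k - 1) t := by
  have hk₀ : 0 < k := by linarith
  have hc₀ : 0 ≤ (k - 1) / k := div_nonneg (by linarith) hk₀.le
  have hc₁ : (k - 1) / k ≤ 1 := (div_le_one hk₀).2 (by linarith)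
  have hmin₀ : 0 ≤ min k t := le_min hk₀.le ht
  refine le_min ?_ ?_
  · calc (k - 1) / k * min k t ≤ (k - 1) / k * k := by gcongr; exact min_le_left k t
      _ = k - 1 := div_mul_cancel₀ _ hk₀.ne'
  · calc (k - 1) / k * min k t ≤ 1 * min k t := by gcongr
      _ ≤ t := by rw [one_mul]; exact min_le_right k t

lemma add_one_sub_div_mul_min_le_min_add {k x t : ℝ} (hk : 1 ≤ k) (ht : 0 ≤ t)
    (hx : x = 0 ∨ x = 1) :
    x + (1 - x / k) * min k t ≤ min k (x + t) := by
  rcases hx with rfl | rfl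
  · simp
  · have hk₀ : k ≠ 0 := by positivity
    have hmin : min k (1 + t) = 1 + min (k - 1) t := by
      rw [← min_add_add_left, add_sub_cancel]
    have hcoef : 1 - 1 / k = (k - 1) / k := by field_simp
    rw [hmin, hcoef]
    linarith [div_mul_min_le_min_sub_one hk ht]

section Integral

variable {Ω : Type*} [MeasurableSpace Ω] {μ : Measure Ω}

lemma integral_eq_measureReal_of_zero_or_one {X : Ω → ℝ} (hX : Measurable X)
    (hX01 : ∀ ω, X ω = 0 ∨ X ω = 1) :
    ∫ ω, X ω ∂μ = μ.real {ω | X ω = 1} := by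
  have hX_eq : X = {ω | X ω = 1}.indicator 1 := by
    funext ω
    rcases hX01 ω with h | h <;> simp [h]
  conv_lhs => rw [hX_eq]
  exact integral_indicator_one (hX (measurableSet_singleton 1))

lemma ProbabilityTheory.IndepFun.integrable_add_one_sub_div_mul [IsFiniteMeasure μ]
    {X Z : Ω → ℝ} (hXZ : IndepFun X Z μ) (hX : Integrable X μ) (hZ : Integrable Z μ)
    (c : ℝ) :
    Integrable (fun ω => X ω + (1 - X ω / c) * Z ω) μ := by
  have hcoef : IndepFun (fun ω => 1 - X ω / c) Z μ :=
    hXZ.comp (measurable_const.sub (measurable_id.div_const c)) measurable_id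
  exact hX.add (hcoef.integrable_mul ((integrable_const 1).sub (hX.div_const c)) hZ)

lemma ProbabilityTheory.IndepFun.integral_add_one_sub_div_mul {X Z : Ω → ℝ}
    (hXZ : IndepFun X Z μ) (hX : Integrable X μ) (hZ : Integrable Z μ) (c : ℝ) :
    ∫ ω, X ω + (1 - X ω / c) * Z ω ∂μ
      = (∫ ω, X ω ∂μ) + (1 - (∫ ω, X ω ∂μ) / c) * ∫ ω, Z ω ∂μ := by
  have hXZ_int : Integrable (fun ω => X ω * Z ω) μ := hXZ.integrable_mul hX hZ
  have hsum_int : Integrable (fun ω => X ω + Z ω) μ := hX.add hZ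
  have hexpand : (fun ω => X ω + (1 - X ω / c) * Z ω)
      = fun ω => X ω + Z ω - c⁻¹ * (X ω * Z ω) := by
    funext ω; ring
  rw [hexpand, integral_sub hsum_int (hXZ_int.const_mul _), integral_add hX hZ,
    integral_const_mul, hXZ.integral_fun_mul_eq_mul_integral hX.aestronglyMeasurable
      hZ.aestronglyMeasurable]
  ring

end Integral

/-- Key inductive inequality: for a `{0,1}`-valued `X` with `P[X=1] = y₁`, a nonnegative
integer-valued `Y` independent of `X`, and an integer `k ≥ 1`,
`E[min{k, X+Y}] ≥ y₁ + (1 − y₁/k) E[min{k, Y}]`. -/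
theorem stmt_15 {Ω : Type*} [MeasurableSpace Ω] (μ : Measure Ω) [IsProbabilityMeasure μ]
    (X : Ω → ℝ) (Y : Ω → ℕ) (y₁ : ℝ)
    (hXmeas : Measurable X) (hYmeas : Measurable Y)
    (hX01 : ∀ ω, X ω = 0 ∨ X ω = 1)
    (hXmarg : μ {ω | X ω = 1} = ENNReal.ofReal y₁) (hy₁ : y₁ ∈ Set.Icc (0 : ℝ) 1)
    (hindep : IndepFun X Y μ)
    (k : ℕ) (hk : 1 ≤ k) :
    ∫ ω, min (k : ℝ) (X ω + (Y ω : ℝ)) ∂μ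
      ≥ y₁ + (1 - y₁ / k) * ∫ ω, min (k : ℝ) ((Y ω : ℝ)) ∂μ := by
  set Z : Ω → ℝ := fun ω => min (k : ℝ) (Y ω)
  have hmin : Measurable fun n : ℕ => min (k : ℝ) n := measurable_from_top
  have hXZ : IndepFun X Z μ := hindep.comp measurable_id hmin
  have hX_mem : ∀ ω, X ω ∈ Set.Icc (0 : ℝ) 1 := fun ω => by
    rcases hX01 ω with h | h <;> simp [h]
  have hX_int : Integrable X μ := .of_mem_Icc 0 1 hXmeas.aemeasurable (.of_forall hX_mem)
  have hZ_int : Integrable Z μ :=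
    .of_mem_Icc 0 k (hmin.comp hYmeas).aemeasurable
      (.of_forall fun ω => ⟨le_min (by positivity) (by positivity), min_le_left _ _⟩)
  have hsum_int : Integrable (fun ω => min (k : ℝ) (X ω + Y ω)) μ :=
    .of_mem_Icc 0 k (by fun_prop)
      (.of_forall fun ω =>
        ⟨le_min (by positivity) (add_nonneg (hX_mem ω).1 (by positivity)), min_le_left _ _⟩)
  have hEX : ∫ ω, X ω ∂μ = y₁ := by
    rw [integral_eq_measureReal_of_zero_or_one hXmeas hX01, measureReal_def, hXmarg,
      ENNReal.toReal_ofReal hy₁.1]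
  calc y₁ + (1 - y₁ / k) * ∫ ω, Z ω ∂μ
      = ∫ ω, X ω + (1 - X ω / k) * Z ω ∂μ := by
        rw [hXZ.integral_add_one_sub_div_mul hX_int hZ_int, hEX]
    _ ≤ ∫ ω, min (k : ℝ) (X ω + Y ω) ∂μ := by
        refine integral_mono (hXZ.integrable_add_one_sub_div_mul hX_int hZ_int k) hsum_int
          fun ω => add_one_sub_div_mul_min_le_min_add (by exact_mod_cast hk) (by positivity)
            (hX01 ω)
end
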